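/- At any fixed point of the bidding game where each client n pays ρ_n* > 0 and receives delivery ratio q_n* > 0, the vector q* maximizes the total utility Σ U_i(q_i) over the feasible region. -/

import Mathlib

/-!
The client's optimality condition says that the price `ψ n` is a supergradient of `U n` at
`q n`, so `∑ U i (q' i) ≤ ∑ U i (q i) + ∑ ψ i (q' i - q i)`. Since `ψ i = ρ i / q i` is the
gradient of `∑ ρ i log q i` at `q`, the last sum is the derivative of the access point's
objective in the feasible direction `q' - q`, which is nonpositive because `q` maximizes it.
-/

open Finset

lemma hasFDerivAt_sum_mul_log {ι : Type*} [Fintype ι] (ρ : ι → ℝ) {q : ι → ℝ}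
    (hq : ∀ i, q i ≠ 0) :
    HasFDerivAt (fun x : ι → ℝ => ∑ i, ρ i * Real.log (x i))
      (∑ i, (ρ i / q i) • ContinuousLinearMap.proj (R := ℝ) (φ := fun _ : ι => ℝ) i) q := by
  refine HasFDerivAt.fun_sum fun i _ => ?_
  simpa only [div_eq_mul_inv, mul_smul] using
    ((hasFDerivAt_apply i q).log (hq i)).const_mul (ρ i)

lemma sum_mul_sub_div_nonpos_of_isMaxOn {ι : Type*} [Fintype ι] {ρ q y : ι → ℝ}
    {s : Set (ι → ℝ)} (hmax : IsMaxOn (fun x => ∑ i, ρ i * Real.log (x i)) s q)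
    (hq : ∀ i, 0 < q i) (hseg : openSegment ℝ q y ⊆ s) :
    ∑ i, ρ i * ((y i - q i) / q i) ≤ 0 := by
  have hderiv := hmax.localize.hasFDerivWithinAt_nonpos
    (hasFDerivAt_sum_mul_log ρ fun i => (hq i).ne').hasFDerivWithinAt
    (sub_mem_posTangentConeAt_of_openSegment_subset hseg)
  convert hderiv using 1
  simp only [_root_.sum_apply, smul_apply,
    ContinuousLinearMap.proj_apply, Pi.sub_apply, smul_eq_mul]
  exact sum_congr rfl fun i _ => by ring

lemma convex_setOf_forall_sum_div_le {ι : Type*} (p : ι → ℝ) (c : Finset ι → ℝ) :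
    Convex ℝ {x : ι → ℝ | ∀ S : Finset ι, ∑ i ∈ S, x i / p i ≤ c S} := by
  simp only [Set.ofPred_forall]
  exact convex_iInter fun S => convex_halfSpace_le
    ⟨fun x y => by simp [sum_add_distrib, add_div], fun a x => by simp [mul_sum, mul_div_assoc]⟩ _

lemma openSegment_subset_pos_inter {ι : Type*} {C : Set (ι → ℝ)} (hC : Convex ℝ C)
    {x y : ι → ℝ} (hx : ∀ i, 0 < x i) (hy : ∀ i, 0 ≤ y i) (hxC : x ∈ C) (hyC : y ∈ C) :
    openSegment ℝ x y ⊆ {z | ∀ i, 0 < z i} ∩ C := by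
  rintro _ ⟨a, b, ha, hb, hab, rfl⟩
  refine ⟨fun i => ?_, hC.openSegment_subset hxC hyC ⟨a, b, ha, hb, hab, rfl⟩⟩
  simp only [Pi.add_apply, Pi.smul_apply, smul_eq_mul]
  exact add_pos_of_pos_of_nonneg (mul_pos ha (hx i)) (mul_nonneg hb.le (hy i))

lemma le_add_mul_sub_of_isMaxOn_bid {u : ℝ → ℝ} {ψ ρ : ℝ} (hψ : 0 < ψ)
    (hopt : IsMaxOn (fun r => u (r / ψ) - r) (Set.Ici 0) ρ) {x : ℝ} (hx : 0 ≤ x) :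
    u x ≤ u (ρ / ψ) + ψ * (x - ρ / ψ) := by
  have h := isMaxOn_iff.1 hopt (ψ * x) (mul_nonneg hψ.le hx)
  simp only [mul_div_cancel_left₀ _ hψ.ne'] at h
  rw [mul_sub, mul_div_cancel₀ _ hψ.ne']
  linarith

theorem stmt_7_general (N : ℕ) (τ : ℝ) (p : Fin N → ℝ) (I : Finset (Fin N) → ℝ)
    (U : Fin N → ℝ → ℝ)
    (q ρ ψ : Fin N → ℝ)
    (hqpos : ∀ n, 0 < q n) (hρpos : ∀ n, 0 < ρ n)
    (hψ : ∀ n, ψ n = ρ n / q n)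
    -- (a) each client's bid maximizes its net profit
    (hclient : ∀ n, ∀ r : ℝ, 0 ≤ r → U n (r / ψ n) - r ≤ U n (ρ n / ψ n) - ρ n)
    -- (b) the AP's allocation solves ACCESS-POINT
    (hqfeas : ∀ S : Finset (Fin N), ∑ i ∈ S, q i / p i ≤ τ - I S)
    (hap : ∀ q' : Fin N → ℝ, (∀ n, 0 < q' n) →
      (∀ S : Finset (Fin N), ∑ i ∈ S, q' i / p i ≤ τ - I S) →
      ∑ i, ρ i * Real.log (q' i) ≤ ∑ i, ρ i * Real.log (q i)) :
    ∀ q' : Fin N → ℝ, (∀ n, 0 ≤ q' n) →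
      (∀ S : Finset (Fin N), ∑ i ∈ S, q' i / p i ≤ τ - I S) →
      ∑ i, U i (q' i) ≤ ∑ i, U i (q i) := by
  intro q' hq' hq'feas
  have hψpos : ∀ n, 0 < ψ n := fun n => hψ n ▸ div_pos (hρpos n) (hqpos n)
  have hdemand : ∀ n, ρ n / ψ n = q n := fun n => by rw [hψ n, div_div_cancel₀ (hρpos n).ne']
  have hsupergrad : ∀ n, U n (q' n) ≤ U n (q n) + ψ n * (q' n - q n) := fun n => by
    simpa only [hdemand] using
      le_add_mul_sub_of_isMaxOn_bid (hψpos n) (isMaxOn_iff.2 (hclient n)) (hq' n)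
  have hfoc : ∑ i, ρ i * ((q' i - q i) / q i) ≤ 0 :=
    sum_mul_sub_div_nonpos_of_isMaxOn (isMaxOn_iff.2 fun x hx => hap x hx.1 hx.2) hqpos
      (openSegment_subset_pos_inter (convex_setOf_forall_sum_div_le p fun S => τ - I S)
        hqpos hq' hqfeas hq'feas)
  calc ∑ i, U i (q' i) ≤ ∑ i, (U i (q i) + ψ i * (q' i - q i)) :=
        sum_le_sum fun i _ => hsupergrad i
    _ = ∑ i, U i (q i) + ∑ i, ρ i * ((q' i - q i) / q i) := by
        rw [sum_add_distrib]
        exact congrArg _ (sum_congr rfl fun i _ => by rw [hψ i]; ring)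
    _ ≤ ∑ i, U i (q i) := add_le_of_nonpos_right hfoc

/-- Theorem 3: at any fixed point of the bidding game where each client `n` pays
`ρ n > 0` and receives delivery ratio `q n > 0`, the vector `q` maximizes the total
utility `∑ U_i(q_i)` over the feasible region.  The fixed point property says, with
`ψ n = ρ n / q n`, that (a) `ρ n` maximizes `U_n(r/ψ_n) - r` over `r ≥ 0` for every
`n`, and (b) `q` maximizes `∑ ρ_i log q_i` over the feasible region. -/
theorem stmt_7 (N : ℕ) (τ : ℝ) (p : Fin N → ℝ) (I : Finset (Fin N) → ℝ)
    (hp : ∀ n, 0 < p n ∧ p n ≤ 1)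
    (U : Fin N → ℝ → ℝ)
    (hUmono : ∀ n, StrictMonoOn (U n) (Set.Ioc 0 1))
    (hUconc : ∀ n, StrictConcaveOn ℝ (Set.Ioc 0 1) (U n))
    -- Slater's condition
    (hSlater : ∃ x : Fin N → ℝ, (∀ n, 0 < x n) ∧
      ∀ S : Finset (Fin N), ∑ i ∈ S, x i / p i < τ - I S)
    (q ρ ψ : Fin N → ℝ)
    (hqpos : ∀ n, 0 < q n) (hρpos : ∀ n, 0 < ρ n)
    (hψ : ∀ n, ψ n = ρ n / q n)
    -- (a) each client's bid maximizes its net profit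
    (hclient : ∀ n, ∀ r : ℝ, 0 ≤ r → U n (r / ψ n) - r ≤ U n (ρ n / ψ n) - ρ n)
    -- (b) the AP's allocation solves ACCESS-POINT
    (hqfeas : ∀ S : Finset (Fin N), ∑ i ∈ S, q i / p i ≤ τ - I S)
    (hap : ∀ q' : Fin N → ℝ, (∀ n, 0 < q' n) →
      (∀ S : Finset (Fin N), ∑ i ∈ S, q' i / p i ≤ τ - I S) →
      ∑ i, ρ i * Real.log (q' i) ≤ ∑ i, ρ i * Real.log (q i)) :
    ∀ q' : Fin N → ℝ, (∀ n, 0 ≤ q' n) →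
      (∀ S : Finset (Fin N), ∑ i ∈ S, q' i / p i ≤ τ - I S) →
      ∑ i, U i (q' i) ≤ ∑ i, U i (q i) :=
  stmt_7_general N τ p I U q ρ ψ hqpos hρpos hψ hclient hqfeas hap
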